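/- arXiv:2402.05938 — 4 statements merged into one kernel-verified Lean document; each statement's English description precedes it below -/
import Mathlib

section
/- The formal power series g(X) = ∑_{n≥1} 2(4n+1)!/((n+1)!(3n+2)!) X^n is algebraic over the field of rational functions ℚ(X), of degree at most 4. -/
/-!
Let `B = 1 + X B⁴` be the quaternary Fuss–Catalan series and `u = B - 1`, so that
`u = X (1 + u)⁴`. Lagrange inversion gives `[Xⁿ] uᵏ = (k/n) C(4n, n-k)`, and with it the
coefficients of `g` are those of `u - u² - u³ = 2B² - B³ - 1`. Multiplying the quartic by `B¹²`
and substituting `X B⁴ = B - 1` turns it into a polynomial identity in `B` alone.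

Instead of invoking Lagrange inversion, the coefficients of all powers `Bʳ` are checked by
induction on the degree: they satisfy `Bʳ⁺¹ = Bʳ + X Bʳ⁺⁴`, which on the closed form is Pascal's
rule.
-/

open PowerSeries

noncomputable def g : PowerSeries ℚ :=
  PowerSeries.mk (fun n =>
    if n = 0 then 0 else
      2 * (Nat.factorial (4 * n + 1)) / ((Nat.factorial (n + 1)) * (Nat.factorial (3 * n + 2))))

namespace PowerSeries

variable {R : Type*} [CommRing R]

theorem coeff_mul_eq_of_X_pow_dvd_sub {n : ℕ} {φ ψ : R⟦X⟧} (hdvd : X ^ (n + 1) ∣ φ - ψ)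
    (f : R⟦X⟧) : coeff n (f * φ) = coeff n (f * ψ) := by
  obtain ⟨c, hc⟩ := hdvd
  rw [← sub_eq_zero, ← map_sub, ← mul_sub, hc, mul_left_comm, coeff_X_pow_mul', if_neg (by omega)]

/-- `[Xⁿ] Bʳ = r / ((q+1)n + r) · C((q+1)n + r, n)` for `B = 1 + X B^(q+1)`, written without
division. -/
def fussCatalanPowCoeff (q r : ℕ) : ℕ → R
  | 0 => 1
  | n + 1 => (((q + 1) * n + r + q).choose (n + 1) : R) - q * ((q + 1) * n + r + q).choose n

variable (q : ℕ)

theorem fussCatalanPowCoeff_zero_succ (n : ℕ) : fussCatalanPowCoeff (R := R) q 0 (n + 1) = 0 := by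
  have h := Nat.choose_succ_right_eq ((q + 1) * n + q) n
  rw [show (q + 1) * n + q - n = q * (n + 1) by rw [Nat.add_mul, Nat.mul_add]; omega] at h
  have h' : ((q + 1) * n + q).choose (n + 1) = q * ((q + 1) * n + q).choose n :=
    Nat.eq_of_mul_eq_mul_right (Nat.succ_pos n) (by rw [h, Nat.succ_eq_add_one]; ring)
  simp only [fussCatalanPowCoeff, add_zero, h']
  push_cast
  ring

theorem fussCatalanPowCoeff_succ_succ (r n : ℕ) :
    fussCatalanPowCoeff (R := R) q (r + 1) (n + 1) =
      fussCatalanPowCoeff q r (n + 1) + fussCatalanPowCoeff q (r + q + 1) n := by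
  rcases n with _ | m
  · simp [fussCatalanPowCoeff]
  · simp only [fussCatalanPowCoeff]
    rw [show (q + 1) * (m + 1) + (r + 1) + q = ((q + 1) * (m + 1) + r + q) + 1 by ring,
      show (q + 1) * m + (r + q + 1) + q = (q + 1) * (m + 1) + r + q by ring,
      Nat.choose_succ_succ' _ (m + 1), Nat.choose_succ_succ' _ m]
    push_cast
    ring

def fussCatalan : R⟦X⟧ := mk (fussCatalanPowCoeff q 1)

theorem constantCoeff_fussCatalan : constantCoeff (fussCatalan (R := R) q) = 1 := by
  rw [← coeff_zero_eq_constantCoeff_apply, fussCatalan, coeff_mk, fussCatalanPowCoeff]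

theorem isUnit_fussCatalan : IsUnit (fussCatalan (R := R) q) :=
  isUnit_iff_constantCoeff.mpr (by rw [constantCoeff_fussCatalan]; exact isUnit_one)

theorem coeff_succ_fussCatalan (n : ℕ) :
    coeff (n + 1) (fussCatalan (R := R) q) = fussCatalanPowCoeff q (q + 1) n := by
  rw [fussCatalan, coeff_mk, fussCatalanPowCoeff_succ_succ, fussCatalanPowCoeff_zero_succ,
    zero_add, zero_add]

theorem coeff_fussCatalan_pow (n r : ℕ) :
    coeff n (fussCatalan (R := R) q ^ r) = fussCatalanPowCoeff q r n := by
  induction n using Nat.strong_induction_on generalizing r with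
  | _ n ih =>
  rcases n with _ | n
  · rw [coeff_zero_eq_constantCoeff_apply, map_pow, constantCoeff_fussCatalan, one_pow,
      fussCatalanPowCoeff]
  have hdvd : X ^ (n + 2) ∣ fussCatalan (R := R) q - (1 + X * fussCatalan q ^ (q + 1)) := by
    refine X_pow_dvd_iff.mpr fun m hm => ?_
    rcases m with _ | m
    · simp [constantCoeff_fussCatalan]
    · rw [map_sub, map_add, coeff_succ_X_mul, coeff_succ_fussCatalan, ih m (by omega), coeff_one,
        if_neg m.succ_ne_zero, zero_add, sub_self]
  induction r with
  | zero => rw [pow_zero, coeff_one, if_neg n.succ_ne_zero, fussCatalanPowCoeff_zero_succ]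
  | succ r ihr =>
    rw [pow_succ, coeff_mul_eq_of_X_pow_dvd_sub hdvd, mul_add, mul_one, map_add, ihr,
      mul_left_comm, coeff_succ_X_mul, ← pow_add, ih n (by omega), fussCatalanPowCoeff_succ_succ,
      add_assoc]

theorem fussCatalan_eq_one_add_X_mul_pow :
    fussCatalan (R := R) q = 1 + X * fussCatalan q ^ (q + 1) := by
  ext n
  rcases n with _ | n
  · simp [constantCoeff_fussCatalan]
  · rw [map_add, coeff_succ_X_mul, coeff_succ_fussCatalan, coeff_fussCatalan_pow, coeff_one,
      if_neg n.succ_ne_zero, zero_add]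

end PowerSeries

section Quartic

variable {R : Type*} [CommRing R]

def quartic (x y : R) : R :=
  x * (x ^ 2 + 11 * x - 1) + (4 * x ^ 3 + 25 * x ^ 2 - 14 * x + 1) * y
    + x * (6 * x ^ 2 + 17 * x + 3) * y ^ 2 + x ^ 2 * (4 * x + 3) * y ^ 3 + x ^ 3 * y ^ 4

theorem map_quartic {S : Type*} [CommRing S] (f : R →+* S) (x y : R) :
    f (quartic x y) = quartic (f x) (f y) := by
  simp only [quartic, map_add, map_sub, map_mul, map_pow, map_ofNat, map_one]

theorem quartic_eq_zero {x b : R} (hb : IsUnit b) (hx : b = 1 + x * b ^ 4) :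
    quartic x (2 * b ^ 2 - b ^ 3 - 1) = 0 := by
  refine ((hb.pow 12).mul_right_eq_zero).mp ?_
  set y := 2 * b ^ 2 - b ^ 3 - 1 with hy
  have h : b ^ 12 * quartic x y =
      b ^ 12 * y + (x * b ^ 4) * b ^ 8 * (3 * y ^ 2 - 14 * y - 1)
        + (x * b ^ 4) ^ 2 * b ^ 4 * (3 * y ^ 3 + 17 * y ^ 2 + 25 * y + 11)
        + (x * b ^ 4) ^ 3 * (y + 1) ^ 4 := by
    rw [quartic]; ring
  rw [h, show x * b ^ 4 = b - 1 by linear_combination -hx, hy]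
  ring

end Quartic

open Nat in
theorem g_eq_fussCatalan : g = 2 * fussCatalan 3 ^ 2 - fussCatalan 3 ^ 3 - 1 := by
  ext n
  rw [map_sub, map_sub, two_mul, map_add, coeff_fussCatalan_pow, coeff_fussCatalan_pow, g,
    coeff_mk, coeff_one]
  rcases n with _ | n
  · norm_num [fussCatalanPowCoeff]
  rw [if_neg n.succ_ne_zero, if_neg n.succ_ne_zero, sub_zero, ← two_mul]
  simp only [fussCatalanPowCoeff]
  rw [cast_choose ℚ (by omega : n + 1 ≤ 4 * n + 5), cast_choose ℚ (by omega : n ≤ 4 * n + 5),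
    cast_choose ℚ (by omega : n + 1 ≤ 4 * n + 6), cast_choose ℚ (by omega : n ≤ 4 * n + 6),
    show 4 * n + 5 - (n + 1) = 3 * n + 4 by omega, show 4 * n + 5 - n = 3 * n + 5 by omega,
    show 4 * n + 6 - (n + 1) = 3 * n + 5 by omega, show 4 * n + 6 - n = 3 * n + 6 by omega,
    show 4 * (n + 1) + 1 = 4 * n + 5 by ring, show 3 * (n + 1) + 2 = 3 * n + 5 by ring]
  simp only [factorial_succ (4 * n + 5), factorial_succ (3 * n + 5), factorial_succ (3 * n + 4),
    factorial_succ (n + 1), factorial_succ n]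
  push_cast
  field_simp
  ring

theorem stmt9 :
    ∃ p : Polynomial (Polynomial ℚ), p ≠ 0 ∧ p.natDegree ≤ 4 ∧
      Polynomial.eval₂ (Polynomial.coeToPowerSeries.ringHom) g p = 0 := by
  refine ⟨quartic (Polynomial.C Polynomial.X) Polynomial.X, fun h => ?_, ?_, ?_⟩
  · have h01 := congrArg (Polynomial.eval₂RingHom (Polynomial.evalRingHom 0) 1) h
    rw [map_quartic, map_zero, Polynomial.coe_eval₂RingHom, Polynomial.eval₂_C,
      Polynomial.eval₂_X, Polynomial.coe_evalRingHom, Polynomial.eval_X] at h01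
    norm_num [quartic] at h01
  · unfold quartic
    compute_degree!
  · rw [← Polynomial.coe_eval₂RingHom, map_quartic, Polynomial.coe_eval₂RingHom,
      Polynomial.eval₂_C, Polynomial.eval₂_X, Polynomial.coeToPowerSeries.ringHom_apply,
      Polynomial.coe_X, g_eq_fussCatalan]
    exact quartic_eq_zero (isUnit_fussCatalan 3) (fussCatalan_eq_one_add_X_mul_pow 3)
end

section
/- The limit as n → ∞ of (∑_{i+j+k=n, i,j,k≥1} a(i)a(j)a(k)) / a(n) equals 25/243, where a(n) = 2(4n+1)!/((n+1)!(3n+2)!). -/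
open Filter Finset

noncomputable def a (n : ℕ) : ℝ :=
  2 * (Nat.factorial (4 * n + 1)) / ((Nat.factorial (n + 1)) * (Nat.factorial (3 * n + 2)))

/-!
Let `B = 1 + x B⁴` be the quartic tree function. The coefficients `raney 4 p n` of `Bᵖ` are the
Raney numbers `p / (4n + p) * choose (4n + p) n`, and `∑ a(n) xⁿ = 2B² − B³`. Hence the triple
convolution is the `n`-th coefficient of `(2B² − B³ − 1)³`, a fixed integer combination of
`raney 4 p n` for `2 ≤ p ≤ 9`. Each of these is a polynomial in `n` times the common factor
`(4n)! / (n! (3n + 9)!)`, so the ratio is a rational function of `n` of degree `7 / 7`, whose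
leading coefficients give `1800 / 17496 = 25 / 243`.
-/

open Nat

/-- `raney s p n` is the coefficient of `xⁿ` in `Bᵖ`, where `B = 1 + x Bˢ`; the recursion is
`B^(p+1) = Bᵖ + x B^(p+s)`. -/
def raney (s : ℕ) : ℕ → ℕ → ℕ
  | _, 0 => 1
  | 0, _ + 1 => 0
  | p + 1, n + 1 => raney s p (n + 1) + raney s (p + s) n
termination_by p n => (n, p)

section Raney

variable (s : ℕ)

@[simp] lemma raney_zero_right (p : ℕ) : raney s p 0 = 1 := by rw [raney]

@[simp] lemma raney_zero_succ (n : ℕ) : raney s 0 (n + 1) = 0 := by rw [raney]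

lemma raney_succ_succ (p n : ℕ) :
    raney s (p + 1) (n + 1) = raney s p (n + 1) + raney s (p + s) n := by
  rw [raney]

lemma raney_add (p q n : ℕ) :
    raney s (p + q) n = ∑ x ∈ antidiagonal n, raney s p x.1 * raney s q x.2 := by
  induction n generalizing p q with
  | zero => simp
  | succ m ih =>
    induction p with
    | zero => simp [Nat.sum_antidiagonal_succ]
    | succ p ihp =>
      rw [Nat.sum_antidiagonal_succ, add_right_comm, raney_succ_succ, ihp, add_right_comm, ih,
        Nat.sum_antidiagonal_succ]
      simp only [raney_zero_right, raney_succ_succ, add_mul, sum_add_distrib]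
      ring

end Raney

lemma raney_succ_mul_factorial_mul_factorial (r p n : ℕ) :
    raney (r + 1) (p + 1) n * (n ! * (r * n + p + 1)!) = (p + 1) * ((r + 1) * n + p)! := by
  induction n generalizing p with
  | zero => simp [factorial_succ]
  | succ m ih =>
    induction p with
    | zero =>
      rw [raney_succ_succ, raney_zero_succ, zero_add, zero_add, factorial_succ m,
        show r * (m + 1) + 0 + 1 = r * m + r + 1 by ring,
        show (r + 1) * (m + 1) + 0 = (r + 1) * m + r + 1 by ring, factorial_succ ((r + 1) * m + r)]
      calc _ = (m + 1) * (raney (r + 1) (r + 1) m * (m ! * (r * m + r + 1)!)) := by ring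
        _ = _ := by rw [ih r]; ring
    | succ p ihp =>
      set K := r * m + r + p + 1
      set M := (r + 1) * m + r + p + 1
      have hp : raney (r + 1) (p + 1) (m + 1) * ((m + 1)! * K !) = (p + 1) * M ! := by
        rwa [show r * (m + 1) + p + 1 = K by ring, show (r + 1) * (m + 1) + p = M by ring] at ihp
      have hpr : raney (r + 1) (p + r + 1 + 1) m * (m ! * (K + 1)!) = (p + r + 1 + 1) * M ! := by
        have h := ih (p + r + 1)
        rwa [show r * m + (p + r + 1) + 1 = K + 1 by ring,
          show (r + 1) * m + (p + r + 1) = M by ring] at h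
      rw [raney_succ_succ, show p + 1 + (r + 1) = p + r + 1 + 1 by ring,
        show r * (m + 1) + (p + 1) + 1 = K + 1 by ring,
        show (r + 1) * (m + 1) + (p + 1) = M + 1 by ring]
      calc _ = (K + 1) * (raney (r + 1) (p + 1) (m + 1) * ((m + 1)! * K !))
            + (m + 1) * (raney (r + 1) (p + r + 1 + 1) m * (m ! * (K + 1)!)) := by
            rw [factorial_succ K, factorial_succ m]; ring
        _ = _ := by rw [hp, hpr, factorial_succ M]; ring

lemma cast_raney_succ_eq {K : Type*} [Field K] [CharZero K] (r p m n : ℕ) (hpm : p ≤ m) :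
    (raney (r + 1) (p + 1) n : K) = (p + 1) * ((r + 1) * n + 1).ascFactorial p
      * (r * n + p + 2).ascFactorial (m - p) * (((r + 1) * n)! / (n ! * (r * n + m + 1)!)) := by
  have h := raney_succ_mul_factorial_mul_factorial r p n
  rw [← factorial_mul_ascFactorial ((r + 1) * n) p] at h
  have hm := factorial_mul_ascFactorial (r * n + p + 1) (m - p)
  rw [show r * n + p + 1 + (m - p) = r * n + m + 1 by omega] at hm
  have h' : (raney (r + 1) (p + 1) n : K) * (n ! * (r * n + p + 1)!)
      = (p + 1) * (((r + 1) * n)! * ((r + 1) * n + 1).ascFactorial p) := by exact_mod_cast h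
  have hn : (n ! : K) ≠ 0 := mod_cast factorial_ne_zero n
  have hp : ((r * n + p + 1)! : K) ≠ 0 := mod_cast factorial_ne_zero _
  have hasc : ((r * n + p + 2).ascFactorial (m - p) : K) ≠ 0 := mod_cast (ascFactorial_pos _ _).ne'
  rw [← hm, cast_mul]
  field_simp
  linear_combination h'

section PowerSeries

open PowerSeries

variable (R : Type*) [CommSemiring R]

noncomputable def raneySeries (s p : ℕ) : R⟦X⟧ := mk fun n => (raney s p n : R)

lemma raneySeries_add (s p q : ℕ) :
    raneySeries R s (p + q) = raneySeries R s p * raneySeries R s q := by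
  ext n
  simp [raneySeries, coeff_mul, raney_add s p q n]

lemma raneySeries_zero (s : ℕ) : raneySeries R s 0 = 1 := by
  ext n
  cases n <;> simp [raneySeries, coeff_one]

lemma raneySeries_eq_pow (s p : ℕ) : raneySeries R s p = raneySeries R s 1 ^ p := by
  induction p with
  | zero => exact raneySeries_zero R s
  | succ p ih => rw [raneySeries_add, ih, pow_succ]

variable {R}

lemma coeff_mul_eq_sum_Ico {f g : R⟦X⟧} (hf : constantCoeff f = 0) (hg : constantCoeff g = 0)
    (n : ℕ) : coeff n (f * g) = ∑ i ∈ Ico 1 n, coeff i f * coeff (n - i) g := by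
  rw [coeff_mul, Nat.sum_antidiagonal_eq_sum_range_succ (fun i j => coeff i f * coeff j g)]
  refine (sum_subset (fun i hi => ?_) fun i hi hi' => ?_).symm
  · simp only [mem_Ico, mem_range] at hi ⊢
    omega
  · simp only [mem_Ico, mem_range, not_and_or, not_le, not_lt] at hi hi'
    obtain rfl | rfl : i = 0 ∨ i = n := by omega
    · simp [hf]
    · simp [hg]

lemma coeff_pow_three_eq_sum {f : R⟦X⟧} (hf : constantCoeff f = 0) (n : ℕ) :
    coeff n (f ^ 3) = ∑ i ∈ Ico 1 n, ∑ j ∈ Ico 1 (n - i),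
      coeff i f * coeff j f * coeff (n - i - j) f := by
  rw [pow_three, coeff_mul_eq_sum_Ico hf (by simp [hf])]
  refine sum_congr rfl fun i _ => ?_
  rw [coeff_mul_eq_sum_Ico hf hf, mul_sum]
  simp only [mul_assoc]

end PowerSeries

lemma a_eq_raney (n : ℕ) : a n = 2 * raney 4 2 n - raney 4 3 n := by
  rw [cast_raney_succ_eq 3 1 2 n (by norm_num), cast_raney_succ_eq 3 2 2 n (by norm_num), a]
  simp only [ascFactorial_eq_prod_range, prod_range_succ, prod_range_zero]
  rw [show 4 * n + 1 = (3 + 1) * n + 1 by ring, factorial_succ, factorial_succ n,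
    factorial_succ (3 * n + 2)]
  field_simp
  push_cast
  ring

lemma a_zero : a 0 = 1 := by norm_num [a]

open PowerSeries in
lemma mk_a : mk a = 2 * raneySeries ℝ 4 1 ^ 2 - raneySeries ℝ 4 1 ^ 3 := by
  ext n
  rw [← raneySeries_eq_pow, ← raneySeries_eq_pow, ← map_ofNat (C (R := ℝ)) 2, map_sub,
    coeff_C_mul]
  simp [raneySeries, a_eq_raney]

open PowerSeries in
lemma sum_a_mul_a_mul_a_eq (n : ℕ) (hn : n ≠ 0) :
    ∑ i ∈ Ico 1 n, ∑ j ∈ Ico 1 (n - i), a i * a j * a (n - i - j)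
      = 6 * (raney 4 2 n : ℝ) - 3 * raney 4 3 n - 12 * raney 4 4 n + 12 * raney 4 5 n
        + 5 * raney 4 6 n - 12 * raney 4 7 n + 6 * raney 4 8 n - raney 4 9 n := by
  have h0 : constantCoeff (mk a - 1) = 0 := by simp [a_zero]
  have hcoeff : ∀ k ≠ 0, coeff k (mk a - 1) = a k := fun k hk => by simp [coeff_one, hk]
  have hcube : (2 * raneySeries ℝ 4 1 ^ 2 - raneySeries ℝ 4 1 ^ 3 - 1) ^ 3 = -1
      + C 6 * raneySeries ℝ 4 1 ^ 2 - C 3 * raneySeries ℝ 4 1 ^ 3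
      - C 12 * raneySeries ℝ 4 1 ^ 4 + C 12 * raneySeries ℝ 4 1 ^ 5
      + C 5 * raneySeries ℝ 4 1 ^ 6 - C 12 * raneySeries ℝ 4 1 ^ 7
      + C 6 * raneySeries ℝ 4 1 ^ 8 - raneySeries ℝ 4 1 ^ 9 := by
    simp only [map_ofNat]
    ring
  calc _ = ∑ i ∈ Ico 1 n, ∑ j ∈ Ico 1 (n - i),
        coeff i (mk a - 1) * coeff j (mk a - 1) * coeff (n - i - j) (mk a - 1) := by
        refine sum_congr rfl fun i hi => sum_congr rfl fun j hj => ?_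
        simp only [mem_Ico] at hi hj
        rw [hcoeff i (by omega), hcoeff j (by omega), hcoeff _ (by omega)]
    _ = coeff n ((mk a - 1) ^ 3) := (coeff_pow_three_eq_sum h0 n).symm
    _ = _ := by
        rw [mk_a, hcube]
        simp only [← raneySeries_eq_pow]
        simp [raneySeries, coeff_C_mul, coeff_one, hn]

/- `numPoly` and `denPoly` are the combinations of `sum_a_mul_a_mul_a_eq` and `a_eq_raney` with
`raney 4 p n` replaced by `p (4n+1)⋯(4n+p-1) (3n+p+1)⋯(3n+9)`; in `numPoly` the terms of degree
8 cancel. -/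
open Polynomial in
noncomputable def numPoly : ℝ[X] :=
  C 1800 * X ^ 7 + C 52650 * X ^ 6 + C 492930 * X ^ 5 - C 355590 * X ^ 4 - C 2164410 * X ^ 3
    + C 24300 * X ^ 2 + C 1585440 * X + C 362880

open Polynomial in
noncomputable def denPoly : ℝ[X] :=
  C 17496 * X ^ 7 + C 231822 * X ^ 6 + C 1271862 * X ^ 5 + C 3715470 * X ^ 4 + C 6160914 * X ^ 3
    + C 5662548 * X ^ 2 + C 2535408 * X + C 362880

lemma sum_raney_eq_numPoly (n : ℕ) :
    6 * (raney 4 2 n : ℝ) - 3 * raney 4 3 n - 12 * raney 4 4 n + 12 * raney 4 5 n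
      + 5 * raney 4 6 n - 12 * raney 4 7 n + 6 * raney 4 8 n - raney 4 9 n
      = numPoly.eval (n : ℝ) * ((4 * n)! / (n ! * (3 * n + 9)!)) := by
  rw [cast_raney_succ_eq 3 1 8 n (by norm_num), cast_raney_succ_eq 3 2 8 n (by norm_num),
    cast_raney_succ_eq 3 3 8 n (by norm_num), cast_raney_succ_eq 3 4 8 n (by norm_num),
    cast_raney_succ_eq 3 5 8 n (by norm_num), cast_raney_succ_eq 3 6 8 n (by norm_num),
    cast_raney_succ_eq 3 7 8 n (by norm_num), cast_raney_succ_eq 3 8 8 n (by norm_num)]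
  simp only [ascFactorial_eq_prod_range, prod_range_succ, prod_range_zero]
  simp [numPoly]
  ring

lemma a_eq_denPoly (n : ℕ) : a n = denPoly.eval (n : ℝ) * ((4 * n)! / (n ! * (3 * n + 9)!)) := by
  rw [a_eq_raney, cast_raney_succ_eq 3 1 8 n (by norm_num),
    cast_raney_succ_eq 3 2 8 n (by norm_num)]
  simp only [ascFactorial_eq_prod_range, prod_range_succ, prod_range_zero]
  simp [denPoly]
  ring

lemma tendsto_numPoly_div_denPoly :
    Tendsto (fun n : ℕ => numPoly.eval (n : ℝ) / denPoly.eval (n : ℝ)) atTop (nhds (25 / 243)) := by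
  have hnum : numPoly.degree = 7 := by unfold numPoly; compute_degree!
  have hden : denPoly.degree = 7 := by unfold denPoly; compute_degree!
  have hlead : numPoly.leadingCoeff / denPoly.leadingCoeff = 25 / 243 := by
    rw [Polynomial.leadingCoeff, Polynomial.leadingCoeff,
      Polynomial.natDegree_eq_of_degree_eq_some hnum,
      Polynomial.natDegree_eq_of_degree_eq_some hden]
    norm_num [numPoly, denPoly, Polynomial.coeff_X_pow]
  rw [← hlead]
  exact (Polynomial.div_tendsto_atTop_leadingCoeff_div_of_degree_eq _ _ (hnum.trans hden.symm)).comp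
    tendsto_natCast_atTop_atTop

theorem stmt11 :
    Tendsto (fun n : ℕ =>
        (∑ i ∈ Finset.Ico 1 n, ∑ j ∈ Finset.Ico 1 (n - i),
          a i * a j * a (n - i - j)) / a n)
      atTop (nhds (25 / 243)) := by
  refine tendsto_numPoly_div_denPoly.congr' ?_
  filter_upwards [eventually_ne_atTop 0] with n hn
  rw [sum_a_mul_a_mul_a_eq n hn, sum_raney_eq_numPoly, a_eq_denPoly,
    mul_div_mul_right _ _ (by positivity)]
end

section
/- For all integers n ≥ 1, a(n) = 2(4n+1)!/((n+1)!(3n+2)!) is a positive integer. -/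
open Filter Finset

theorem stmt15 (n : ℕ) (hn : 1 ≤ n) : ∃ m : ℕ, 0 < m ∧ a n = (m : ℝ) := by
  obtain ⟨k, rfl⟩ : ∃ k, n = k + 1 := ⟨n - 1, by omega⟩
  set C1 := (4 * k + 5).choose (k + 2) with hC1def
  set C2 := (4 * k + 5).choose k with hC2def
  have h1 : C1 * Nat.factorial (k + 2) * Nat.factorial (3 * k + 3) =
      Nat.factorial (4 * k + 5) := by
    have h := Nat.choose_mul_factorial_mul_factorial (show k + 2 ≤ 4 * k + 5 by omega)
    have e : 4 * k + 5 - (k + 2) = 3 * k + 3 := by omega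
    rw [e] at h
    exact h
  have h2 : C2 * Nat.factorial k * Nat.factorial (3 * k + 5) =
      Nat.factorial (4 * k + 5) := by
    have h := Nat.choose_mul_factorial_mul_factorial (show k ≤ 4 * k + 5 by omega)
    have e : 4 * k + 5 - k = 3 * k + 5 := by omega
    rw [e] at h
    exact h
  have hf5 : Nat.factorial (3 * k + 5) =
      (3 * k + 5) * ((3 * k + 4) * Nat.factorial (3 * k + 3)) := by
    have e1 : 3 * k + 5 = (3 * k + 4) + 1 := by omega
    have e2 : 3 * k + 4 = (3 * k + 3) + 1 := by omega
    rw [e1, Nat.factorial_succ, e2, Nat.factorial_succ]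
  have hf2 : Nat.factorial (k + 2) = (k + 2) * ((k + 1) * Nat.factorial k) := by
    rw [Nat.factorial_succ, Nat.factorial_succ]
  have hC1D : C1 * (Nat.factorial (k + 2) * Nat.factorial (3 * k + 5)) =
      (3 * k + 4) * (3 * k + 5) * Nat.factorial (4 * k + 5) := by
    rw [hf5]
    calc C1 * (Nat.factorial (k + 2) * ((3 * k + 5) * ((3 * k + 4) * Nat.factorial (3 * k + 3))))
        = (3 * k + 4) * (3 * k + 5) *
          (C1 * Nat.factorial (k + 2) * Nat.factorial (3 * k + 3)) := by ring
      _ = (3 * k + 4) * (3 * k + 5) * Nat.factorial (4 * k + 5) := by rw [h1]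
  have hC2D : C2 * (Nat.factorial (k + 2) * Nat.factorial (3 * k + 5)) =
      (k + 1) * (k + 2) * Nat.factorial (4 * k + 5) := by
    rw [hf2]
    calc C2 * ((k + 2) * ((k + 1) * Nat.factorial k) * Nat.factorial (3 * k + 5))
        = (k + 1) * (k + 2) * (C2 * Nat.factorial k * Nat.factorial (3 * k + 5)) := by ring
      _ = (k + 1) * (k + 2) * Nat.factorial (4 * k + 5) := by rw [h2]
  set D := Nat.factorial (k + 2) * Nat.factorial (3 * k + 5) with hDdef
  have hDpos : 0 < D := Nat.mul_pos (Nat.factorial_pos _) (Nat.factorial_pos _)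
  have hNpos : 0 < Nat.factorial (4 * k + 5) := Nat.factorial_pos _
  have hsum : 9 * C2 * D + 2 * Nat.factorial (4 * k + 5) = C1 * D := by
    have : 9 * C2 * D = 9 * ((k + 1) * (k + 2)) * Nat.factorial (4 * k + 5) := by
      rw [mul_assoc, hC2D]; ring
    rw [this, hC1D]; ring
  have hlt : 9 * C2 < C1 := by
    have hlt' : 9 * C2 * D < C1 * D := by omega
    exact lt_of_mul_lt_mul_right hlt' (Nat.le_of_lt hDpos)
  refine ⟨C1 - 9 * C2, by omega, ?_⟩
  have hmD : (C1 - 9 * C2) * D = 2 * Nat.factorial (4 * k + 5) := by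
    rw [Nat.sub_mul]; omega
  have hcast : ((C1 - 9 * C2 : ℕ) : ℝ) * (D : ℝ) =
      2 * (Nat.factorial (4 * k + 5) : ℝ) := by
    exact_mod_cast congrArg (Nat.cast : ℕ → ℝ) hmD
  have hDne : (D : ℝ) ≠ 0 := by
    exact_mod_cast hDpos.ne'
  show 2 * (Nat.factorial (4 * (k + 1) + 1) : ℝ) /
      ((Nat.factorial ((k + 1) + 1) : ℝ) * (Nat.factorial (3 * (k + 1) + 2) : ℝ)) = _
  have e1 : 4 * (k + 1) + 1 = 4 * k + 5 := by ring
  have e2 : (k + 1) + 1 = k + 2 := by ring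
  have e3 : 3 * (k + 1) + 2 = 3 * k + 5 := by ring
  rw [e1, e2, e3]
  have hDne' : ((Nat.factorial (k + 2) : ℝ) * (Nat.factorial (3 * k + 5) : ℝ)) ≠ 0 := by
    rw [hDdef] at hDne
    push_cast at hDne
    exact hDne
  rw [div_eq_iff hDne']
  rw [hDdef] at hcast
  push_cast at hcast ⊢
  linarith [hcast]
end

section
/- For all integers n ≥ 2, ∑_{k=1}^{n-1} a(k)·a(n-k) < a(n), where a(n) = 2(4n+1)!/((n+1)!(3n+2)!). -/
open Filter Finset

/-!
The ratio `a (n + 1) / a n` is increasing, so `a` is log-convex and, for fixed `k`, the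
normalised term `a k * a (n - k) / a n` decreases in `n`. By symmetry it suffices to bound
twice the sum over `k ≤ n / 2`. For `n ≥ 8` the terms with `k ≤ 4` are at most their values at
`n = 8`, and for `5 ≤ k ≤ n / 2` the term is at most `a k ^ 2 / a (2 * k)`, which is at most
`25 (a 5 ^ 2 / a 10) / k ^ 2` because `k ^ 2 a k ^ 2 / a (2 * k)` decreases from `k = 5` on.
As `∑_{k > 4} 1 / k ^ 2 ≤ 1 / 4`, the total is about `0.89`. The cases `n < 8` are computed.
-/

section RatioMonotone

variable {f : ℕ → ℝ}

theorem monotone_add_div_of_monotone_succ_div (hf : ∀ n, 0 < f n)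
    (hratio : Monotone fun n => f (n + 1) / f n) (d : ℕ) :
    Monotone fun j => f (j + d) / f j := by
  induction d with
  | zero => simpa only [add_zero, div_self (hf _).ne'] using monotone_const
  | succ d ih =>
    have hsplit : (fun j => f (j + (d + 1)) / f j) =
        (fun j => f (j + d + 1) / f (j + d)) * fun j => f (j + d) / f j := by
      funext j
      simp only [Pi.mul_apply, ← add_assoc, div_mul_div_cancel₀ (hf _).ne']
    rw [hsplit]
    exact (hratio.comp (monotone_id.add_const d)).mul ih
      (fun j => (div_pos (hf _) (hf _)).le) fun j => (div_pos (hf _) (hf _)).le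

theorem antitoneOn_mul_sub_div (hf : ∀ n, 0 < f n)
    (hratio : Monotone fun n => f (n + 1) / f n) (k : ℕ) :
    AntitoneOn (fun n => f k * f (n - k) / f n) (Set.Ici k) := by
  intro N (hN : k ≤ N) n (hn : k ≤ n) hNn
  have h := monotone_add_div_of_monotone_succ_div hf hratio k (Nat.sub_le_sub_right hNn k)
  simp only [Nat.sub_add_cancel hN, Nat.sub_add_cancel hn] at h
  rw [div_le_div_iff₀ (hf _) (hf _)] at h
  rw [div_le_div_iff₀ (hf _) (hf _), mul_assoc, mul_assoc]
  exact mul_le_mul_of_nonneg_left (by linarith) (hf k).le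

end RatioMonotone

theorem sum_Ico_le_two_mul_sum_Ioc_half {f : ℕ → ℝ} (n : ℕ) (hf : ∀ k, 0 ≤ f k)
    (hsymm : ∀ k ≤ n, f (n - k) = f k) :
    ∑ k ∈ Ico 1 n, f k ≤ 2 * ∑ k ∈ Ioc 0 (n / 2), f k := by
  rw [← sum_filter_add_sum_filter_not _ (· ≤ n / 2), two_mul]
  have hlow : (Ico 1 n).filter (· ≤ n / 2) = Ioc 0 (n / 2) := by
    ext k
    simp only [mem_filter, mem_Ico, mem_Ioc]
    omega
  have hhigh : ∑ k ∈ (Ico 1 n).filter (¬ · ≤ n / 2), f k ≤ ∑ k ∈ Ioc 0 (n / 2), f k :=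
    calc ∑ k ∈ (Ico 1 n).filter (¬ · ≤ n / 2), f k
        = ∑ k ∈ ((Ico 1 n).filter (¬ · ≤ n / 2)).image (n - ·), f k := by
          rw [sum_image fun i hi j hj _ => by
            simp only [coe_filter, mem_Ico, Set.mem_ofPred_eq] at hi hj
            omega]
          refine sum_congr rfl fun k hk => (hsymm k ?_).symm
          simp only [mem_filter, mem_Ico] at hk
          omega
      _ ≤ ∑ k ∈ Ioc 0 (n / 2), f k := by
          refine sum_le_sum_of_subset_of_nonneg (fun k hk => ?_) fun k _ _ => hf k
          simp only [mem_image, mem_filter, mem_Ico] at hk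
          simp only [mem_Ioc]
          omega
  rw [hlow]
  linarith

noncomputable def aRatio (x : ℝ) : ℝ :=
  8 * (2 * x + 1) * (4 * x + 3) * (4 * x + 5) / (3 * (x + 2) * (3 * x + 4) * (3 * x + 5))

theorem aRatio_pos {x : ℝ} (hx : 0 ≤ x) : 0 < aRatio x := by
  unfold aRatio
  positivity

theorem aRatio_le_succ {x : ℝ} (hx : 0 ≤ x) : aRatio x ≤ aRatio (x + 1) := by
  unfold aRatio
  rw [div_le_div_iff₀ (by positivity) (by positivity), ← sub_nonneg]
  ring_nf
  positivity

theorem sq_mul_aRatio_sq_le {x : ℝ} (hx : 5 ≤ x) :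
    (x + 1) ^ 2 * aRatio x ^ 2 ≤ x ^ 2 * (aRatio (2 * x) * aRatio (2 * x + 1)) := by
  obtain ⟨y, hy, rfl⟩ : ∃ y, 0 ≤ y ∧ x = y + 5 := ⟨x - 5, by linarith, by ring⟩
  unfold aRatio
  rw [div_pow, div_mul_div_comm, mul_div_assoc', mul_div_assoc',
    div_le_div_iff₀ (by positivity) (by positivity), ← sub_nonneg]
  ring_nf
  positivity

theorem a_pos (n : ℕ) : 0 < a n := by
  unfold a
  positivity

theorem a_succ (m : ℕ) : a (m + 1) = a m * aRatio m := by
  have h4 : 4 * (m + 1) + 1 = 4 * m + 1 + 1 + 1 + 1 + 1 := by ring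
  have h3 : 3 * (m + 1) + 2 = 3 * m + 2 + 1 + 1 + 1 := by ring
  unfold a aRatio
  rw [h4, h3]
  simp only [Nat.factorial_succ]
  push_cast
  field_simp
  ring

theorem monotone_a_succ_div : Monotone fun n => a (n + 1) / a n := by
  refine monotone_nat_of_le_succ fun n => ?_
  rw [a_succ (n + 1), mul_div_cancel_left₀ _ (a_pos _).ne', a_succ n,
    mul_div_cancel_left₀ _ (a_pos _).ne']
  exact_mod_cast aRatio_le_succ (Nat.cast_nonneg n)

theorem sq_mul_a_sq_div_a_two_mul_le {k : ℕ} (hk : 5 ≤ k) :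
    (k : ℝ) ^ 2 * (a k * a k / a (2 * k)) ≤ 25 * (a 5 * a 5 / a 10) := by
  refine antitoneOn_nat_Ici_of_succ_le
    (f := fun m : ℕ => (m : ℝ) ^ 2 * (a m * a m / a (2 * m)))
    (fun m (hm : 5 ≤ m) => ?_) Set.self_mem_Ici hk hk |>.trans_eq (by norm_num)
  have hratio := sq_mul_aRatio_sq_le (x := m) (by exact_mod_cast hm)
  have hden : 0 < aRatio (2 * m) * aRatio (2 * m + 1) :=
    mul_pos (aRatio_pos (by positivity)) (aRatio_pos (by positivity))
  rw [show 2 * (m + 1) = 2 * m + 1 + 1 by ring, a_succ (2 * m + 1), a_succ (2 * m), a_succ m]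
  push_cast
  calc ((m : ℝ) + 1) ^ 2 * (a m * aRatio m * (a m * aRatio m) /
        (a (2 * m) * aRatio (2 * m) * aRatio (2 * m + 1)))
      = a m * a m / a (2 * m) * ((m + 1) ^ 2 * aRatio m ^ 2) /
          (aRatio (2 * m) * aRatio (2 * m + 1)) := by
        field_simp
    _ ≤ a m * a m / a (2 * m) * (m ^ 2 * (aRatio (2 * m) * aRatio (2 * m + 1))) /
          (aRatio (2 * m) * aRatio (2 * m + 1)) := by
        have := a_pos m
        have := a_pos (2 * m)
        gcongr
    _ = m ^ 2 * (a m * a m / a (2 * m)) := by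
        rw [mul_div_assoc, mul_div_cancel_right₀ _ hden.ne', mul_comm]

theorem a_mul_a_sub_le {k N n : ℕ} (hkN : k ≤ N) (hNn : N ≤ n) :
    a k * a (n - k) ≤ a k * a (N - k) / a N * a n := by
  rw [← div_le_iff₀ (a_pos n)]
  exact antitoneOn_mul_sub_div a_pos monotone_a_succ_div k hkN (hkN.trans hNn) hNn

theorem a_mul_a_sub_le_inv_sq {k n : ℕ} (hk : 5 ≤ k) (hkn : 2 * k ≤ n) :
    a k * a (n - k) ≤ 25 * (a 5 * a 5 / a 10) * ((k : ℝ) ^ 2)⁻¹ * a n := by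
  have := a_pos n
  calc a k * a (n - k) ≤ a k * a (2 * k - k) / a (2 * k) * a n := a_mul_a_sub_le (by omega) hkn
    _ = (k : ℝ) ^ 2 * (a k * a k / a (2 * k)) * ((k : ℝ) ^ 2)⁻¹ * a n := by
        rw [show 2 * k - k = k by omega]
        field_simp
    _ ≤ 25 * (a 5 * a 5 / a 10) * ((k : ℝ) ^ 2)⁻¹ * a n := by
        gcongr ?_ * _ * _
        exact sq_mul_a_sq_div_a_two_mul_le hk

theorem sum_Ico_a_mul_a_sub_lt_of_eight_le {n : ℕ} (hn : 8 ≤ n) :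
    ∑ k ∈ Ico 1 n, a k * a (n - k) < a n := by
  have hhalf := sum_Ico_le_two_mul_sum_Ioc_half (f := fun k => a k * a (n - k)) n
    (fun k => (mul_pos (a_pos k) (a_pos _)).le) fun k hk => by rw [Nat.sub_sub_self hk, mul_comm]
  rw [← sum_Ioc_consecutive _ (Nat.zero_le 4) (by omega : 4 ≤ n / 2)] at hhalf
  have hhead : ∑ k ∈ Ioc 0 4, a k * a (n - k) ≤
      (∑ k ∈ Ioc 0 4, a k * a (8 - k) / a 8) * a n := by
    rw [sum_mul]
    refine sum_le_sum fun k hk => a_mul_a_sub_le ?_ hn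
    simp only [mem_Ioc] at hk
    omega
  have htail : ∑ k ∈ Ioc 4 (n / 2), a k * a (n - k) ≤
      25 * (a 5 * a 5 / a 10) * (1 / 4) * a n :=
    calc ∑ k ∈ Ioc 4 (n / 2), a k * a (n - k)
        ≤ ∑ k ∈ Ioc 4 (n / 2), 25 * (a 5 * a 5 / a 10) * ((k : ℝ) ^ 2)⁻¹ * a n := by
          refine sum_le_sum fun k hk => ?_
          simp only [mem_Ioc] at hk
          exact a_mul_a_sub_le_inv_sq (by omega) (by omega)
      _ = 25 * (a 5 * a 5 / a 10) * (∑ k ∈ Ioc 4 (n / 2), ((k : ℝ) ^ 2)⁻¹) * a n := by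
          rw [mul_sum, sum_mul]
      _ ≤ 25 * (a 5 * a 5 / a 10) * (1 / 4) * a n := by
          have := a_pos 5
          have := a_pos 10
          have := a_pos n
          gcongr
          refine (sum_Ioc_inv_sq_le_sub (by norm_num) (by omega)).trans ?_
          norm_num
  have hnum :
      2 * (∑ k ∈ Ioc 0 4, a k * a (8 - k) / a 8 + 25 * (a 5 * a 5 / a 10) * (1 / 4)) < 1 := by
    norm_num [sum_Ioc_succ_top, a, Nat.factorial]
  calc ∑ k ∈ Ico 1 n, a k * a (n - k)
      ≤ 2 * (∑ k ∈ Ioc 0 4, a k * a (8 - k) / a 8 + 25 * (a 5 * a 5 / a 10) * (1 / 4)) *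
          a n := by
        linarith
    _ < a n := mul_lt_of_lt_one_left (a_pos n) hnum

theorem stmt16_general (n : ℕ) :
    ∑ k ∈ Finset.Ico 1 n, a k * a (n - k) < a n := by
  rcases lt_or_ge n 8 with hsmall | hlarge
  · interval_cases n <;> norm_num [sum_Ico_eq_sum_range, sum_range_succ, a, Nat.factorial]
  · exact sum_Ico_a_mul_a_sub_lt_of_eight_le hlarge

theorem stmt16 (n : ℕ) (hn : 2 ≤ n) :
    ∑ k ∈ Finset.Ico 1 n, a k * a (n - k) < a n :=
  stmt16_general n
end
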